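/- Let (Ω, ℙ) be a probability space and X₁,…,X_m : Ω → ℝ (m ≥ 1) pairwise uncorrelated square-integrable random variables with means μₗ, variances σₗ² (σₗ > 0), and skewness parameters λₗ. Let Z : ℝ^m → ℝ be affine, Z(x) = b + Σₗ aₗ·xₗ. Then the two-point estimate of the second raw moment, Σ_{l=1}^{m} Σ_{k=1}^{2} w_{l,k} · (Z(μ₁, …, P_{l,k}, …, μ_m))², equals the exact second raw moment E[Z(X₁,…,X_m)²] = (b + Σₗ aₗ·μₗ)² + Σₗ aₗ²·σₗ²; consequently the TPE estimate of the variance of Z is also exact in this case. -/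

import Mathlib

/-!
In the standardized coordinate `ξ`, Hong's two weights of each variable have total mass `1/m`,
vanishing first moment and unit second moment, the last because `ξ₁ ξ₂ = -m`. At the
`(l, k)`-th point an affine `Z` takes the value `Z μ + aₗ σₗ ξ_{l,k}`, so `Z` and `Z²` are
polynomials of degree at most two in `ξ` and the estimates give `Z μ` and
`(Z μ)² + Σₗ aₗ² σₗ²`. For uncorrelated variables these are `E[Z]` and `E[Z²]`, because
`Var Z = Σₗ aₗ² σₗ²`.
-/

open MeasureTheory ProbabilityTheory

namespace HongTwoPoint

lemma locations_mul_eq {m : ℝ} (hm : 0 ≤ m) (c : ℝ) :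
    (c / 2 + √(m + (c / 2) ^ 2)) * (c / 2 - √(m + (c / 2) ^ 2)) = -m := by
  have hsq := Real.sq_sqrt (show 0 ≤ m + (c / 2) ^ 2 by positivity)
  linear_combination -hsq

lemma locations_sub_ne_zero {m : ℝ} (hm : 0 < m) (c : ℝ) :
    (c / 2 + √(m + (c / 2) ^ 2)) - (c / 2 - √(m + (c / 2) ^ 2)) ≠ 0 := by
  have : 0 < √(m + (c / 2) ^ 2) := Real.sqrt_pos.mpr (by positivity)
  linarith

variable {m ξ₁ ξ₂ : ℝ}

lemma weights_add (hm : m ≠ 0) (hne : ξ₁ - ξ₂ ≠ 0) :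
    -(1 / m) * ξ₂ / (ξ₁ - ξ₂) + 1 / m * ξ₁ / (ξ₁ - ξ₂) = 1 / m := by
  field_simp
  ring

lemma weights_mul_add :
    -(1 / m) * ξ₂ / (ξ₁ - ξ₂) * ξ₁ + 1 / m * ξ₁ / (ξ₁ - ξ₂) * ξ₂ = 0 := by
  ring

lemma weights_mul_sq_add (hm : m ≠ 0) (hne : ξ₁ - ξ₂ ≠ 0)
    (hprod : ξ₁ * ξ₂ = -m) :
    -(1 / m) * ξ₂ / (ξ₁ - ξ₂) * ξ₁ ^ 2 + 1 / m * ξ₁ / (ξ₁ - ξ₂) * ξ₂ ^ 2 = 1 := by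
  field_simp
  linear_combination (ξ₂ - ξ₁) * hprod

lemma moments {n : ℕ} (hn : 0 < n) (c : ℝ) {ξ w : Fin 2 → ℝ}
    (hξ₁ : ξ 0 = c / 2 + √(n + (c / 2) ^ 2)) (hξ₂ : ξ 1 = c / 2 - √(n + (c / 2) ^ 2))
    (hw₁ : w 0 = -(1 / n) * ξ 1 / (ξ 0 - ξ 1)) (hw₂ : w 1 = 1 / n * ξ 0 / (ξ 0 - ξ 1)) :
    ∑ k, w k = 1 / n ∧ ∑ k, w k * ξ k = 0 ∧ ∑ k, w k * ξ k ^ 2 = 1 := by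
  have hn' : (0 : ℝ) < n := Nat.cast_pos.mpr hn
  have hne : ξ 0 - ξ 1 ≠ 0 := by rw [hξ₁, hξ₂]; exact locations_sub_ne_zero hn' c
  have hprod : ξ 0 * ξ 1 = -n := by rw [hξ₁, hξ₂]; exact locations_mul_eq hn'.le c
  simp only [Fin.sum_univ_two, hw₁, hw₂]
  exact ⟨weights_add hn'.ne' hne, weights_mul_add,
    weights_mul_sq_add hn'.ne' hne hprod⟩

end HongTwoPoint

section Scheme

variable {ι κ : Type*} [Fintype ι] [Nonempty ι] [Fintype κ] {w ξ : ι → κ → ℝ}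

lemma sum_sum_mul_affine (hw : ∀ l, ∑ k, w l k = 1 / Fintype.card ι)
    (hwξ : ∀ l, ∑ k, w l k * ξ l k = 0) (s : ℝ) (t : ι → ℝ) :
    ∑ l, ∑ k, w l k * (s + t l * ξ l k) = s := by
  have hrow : ∀ l, ∑ k, w l k * (s + t l * ξ l k) = s / Fintype.card ι := fun l => by
    simp only [mul_add, Finset.sum_add_distrib, ← Finset.sum_mul, hw, mul_left_comm _ (t l),
      ← Finset.mul_sum, hwξ]
    ring
  simp [hrow, mul_div_cancel₀]

lemma sum_sum_mul_affine_sq (hw : ∀ l, ∑ k, w l k = 1 / Fintype.card ι)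
    (hwξ : ∀ l, ∑ k, w l k * ξ l k = 0) (hwξ2 : ∀ l, ∑ k, w l k * ξ l k ^ 2 = 1)
    (s : ℝ) (t : ι → ℝ) :
    ∑ l, ∑ k, w l k * (s + t l * ξ l k) ^ 2 = s ^ 2 + ∑ l, t l ^ 2 := by
  have hrow : ∀ l, ∑ k, w l k * (s + t l * ξ l k) ^ 2
      = s ^ 2 / Fintype.card ι + t l ^ 2 := fun l => by
    have hexp : ∀ k, w l k * (s + t l * ξ l k) ^ 2
        = s ^ 2 * w l k + 2 * s * t l * (w l k * ξ l k) + t l ^ 2 * (w l k * ξ l k ^ 2) :=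
      fun k => by ring
    simp only [hexp, Finset.sum_add_distrib, ← Finset.mul_sum, hw, hwξ, hwξ2]
    ring
  simp [hrow, Finset.sum_add_distrib, mul_div_cancel₀]

end Scheme

lemma sum_mul_update {ι : Type*} [Fintype ι] [DecidableEq ι] (a x : ι → ℝ) (l : ι)
    (v : ℝ) :
    ∑ j, a j * Function.update x l v j = ∑ j, a j * x j + a l * (v - x l) := by
  have h : ∀ j, a j * Function.update x l v j
      = a j * x j + (Pi.single l (a l * (v - x l)) : ι → ℝ) j := by
    intro j
    rcases eq_or_ne j l with rfl | h <;> simp [*]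
    ring
  simp_rw [h, Finset.sum_add_distrib, Finset.sum_pi_single', if_pos (Finset.mem_univ l)]

section Uncorrelated

variable {Ω ι : Type*} [MeasurableSpace Ω] {P : Measure Ω} [Fintype ι] {X : ι → Ω → ℝ}

lemma variance_sum_mul_of_uncorrelated [IsFiniteMeasure P] (hX : ∀ i, MemLp (X i) 2 P)
    (hcov : Pairwise fun i j => cov[X i, X j; P] = 0) (a : ι → ℝ) :
    Var[fun ω => ∑ i, a i * X i ω; P] = ∑ i, a i ^ 2 * Var[X i; P] := by
  classical
  rw [variance_fun_sum fun i => (hX i).const_mul (a i)]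
  refine Finset.sum_congr rfl fun i _ => ?_
  rw [Finset.sum_eq_single i (fun j _ hji => by
      rw [covariance_const_mul_left, covariance_const_mul_right, hcov hji.symm]; ring)
    (by simp), covariance_const_mul_left, covariance_const_mul_right,
    covariance_self (hX i).aemeasurable]
  ring

lemma integral_const_add_sum_mul [IsProbabilityMeasure P] (hX : ∀ i, Integrable (X i) P)
    (b : ℝ) (a : ι → ℝ) :
    ∫ ω, b + ∑ i, a i * X i ω ∂P = b + ∑ i, a i * ∫ ω, X i ω ∂P := by
  rw [integral_add (integrable_const b)
      (integrable_finsetSum _ fun i _ => (hX i).const_mul (a i)),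
    integral_finsetSum _ fun i _ => (hX i).const_mul (a i)]
  simp [integral_const_mul]

lemma integral_sq_const_add_sum_mul_of_uncorrelated [IsProbabilityMeasure P]
    (hX : ∀ i, MemLp (X i) 2 P) (hcov : Pairwise fun i j => cov[X i, X j; P] = 0)
    (b : ℝ) (a : ι → ℝ) :
    ∫ ω, (b + ∑ i, a i * X i ω) ^ 2 ∂P
      = (b + ∑ i, a i * ∫ ω, X i ω ∂P) ^ 2 + ∑ i, a i ^ 2 * Var[X i; P] := by
  have hsum : MemLp (fun ω => ∑ i, a i * X i ω) 2 P :=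
    memLp_finsetSum _ fun i _ => (hX i).const_mul (a i)
  have hZ : MemLp (fun ω => b + ∑ i, a i * X i ω) 2 P := (memLp_const b).add hsum
  have hvar := variance_eq_sub hZ
  rw [variance_const_add hsum.aestronglyMeasurable,
    variance_sum_mul_of_uncorrelated hX hcov,
    integral_const_add_sum_mul (fun i => (hX i).integrable one_le_two)] at hvar
  rw [hvar]
  simp

end Uncorrelated

theorem tpe_second_raw_moment_exact_for_affine_general
    {Ω : Type*} [MeasurableSpace Ω] (P : Measure Ω) [IsProbabilityMeasure P]
    (m : ℕ) (hm : 1 ≤ m) (X : Fin m → Ω → ℝ) (μ σ lam : Fin m → ℝ)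
    (hint : ∀ l, Integrable (X l) P)
    (hint2 : ∀ l, Integrable (fun ω => (X l ω) ^ 2) P)
    (hmean : ∀ l, ∫ ω, X l ω ∂P = μ l)
    (hvar : ∀ l, ∫ ω, (X l ω - μ l) ^ 2 ∂P = (σ l) ^ 2)
    (huncorr : ∀ i j, i ≠ j → ∫ ω, (X i ω - μ i) * (X j ω - μ j) ∂P = 0)
    (ξ w Pt : Fin m → Fin 2 → ℝ)
    (hξ₁ : ∀ l, ξ l 0 = lam l / 2 + Real.sqrt ((m : ℝ) + (lam l / 2) ^ 2))
    (hξ₂ : ∀ l, ξ l 1 = lam l / 2 - Real.sqrt ((m : ℝ) + (lam l / 2) ^ 2))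
    (hw₁ : ∀ l, w l 0 = -(1 / (m : ℝ)) * ξ l 1 / (ξ l 0 - ξ l 1))
    (hw₂ : ∀ l, w l 1 = (1 / (m : ℝ)) * ξ l 0 / (ξ l 0 - ξ l 1))
    (hPt : ∀ l k, Pt l k = μ l + ξ l k * σ l)
    (Z : (Fin m → ℝ) → ℝ) (b : ℝ) (a : Fin m → ℝ)
    (hZ : ∀ x, Z x = b + ∑ l, a l * x l) :
    (∑ l, ∑ k, w l k * (Z (Function.update μ l (Pt l k))) ^ 2) =
        ∫ ω, (Z (fun l => X l ω)) ^ 2 ∂P ∧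
      (∫ ω, (Z (fun l => X l ω)) ^ 2 ∂P) =
        (b + ∑ l, a l * μ l) ^ 2 + ∑ l, (a l) ^ 2 * (σ l) ^ 2 ∧
      (∑ l, ∑ k, w l k * (Z (Function.update μ l (Pt l k))) ^ 2) -
          (∑ l, ∑ k, w l k * Z (Function.update μ l (Pt l k))) ^ 2 =
        (∫ ω, (Z (fun l => X l ω)) ^ 2 ∂P) -
          (∫ ω, Z (fun l => X l ω) ∂P) ^ 2 := by
  have : Nonempty (Fin m) := ⟨⟨0, hm⟩⟩
  have hmom l := HongTwoPoint.moments hm (lam l) (hξ₁ l) (hξ₂ l) (hw₁ l) (hw₂ l)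
  have hw l : ∑ k, w l k = 1 / Fintype.card (Fin m) := by
    rw [Fintype.card_fin]; exact (hmom l).1
  have hwξ l := (hmom l).2.1
  have hwξ2 l := (hmom l).2.2
  have hZpt l k : Z (Function.update μ l (Pt l k)) = Z μ + a l * σ l * ξ l k := by
    rw [hZ, hZ, sum_mul_update, hPt]; ring
  have hX l : MemLp (X l) 2 P :=
    (memLp_two_iff_integrable_sq (hint l).aestronglyMeasurable).mpr (hint2 l)
  have hcov : Pairwise fun i j => cov[X i, X j; P] = 0 := fun i j hij => by
    simpa only [covariance, hmean] using huncorr i j hij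
  have hVar l : Var[X l; P] = σ l ^ 2 := by
    rw [variance_eq_integral (hX l).aemeasurable, hmean, hvar]
  have hTPE1 : ∑ l, ∑ k, w l k * Z (Function.update μ l (Pt l k)) = Z μ := by
    simp only [hZpt]; exact sum_sum_mul_affine hw hwξ _ _
  have hTPE2 : ∑ l, ∑ k, w l k * Z (Function.update μ l (Pt l k)) ^ 2
      = Z μ ^ 2 + ∑ l, a l ^ 2 * σ l ^ 2 := by
    simp only [hZpt, sum_sum_mul_affine_sq hw hwξ hwξ2, mul_pow]
  have hE1 : ∫ ω, Z (fun l => X l ω) ∂P = Z μ := by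
    simp only [hZ, integral_const_add_sum_mul hint, hmean]
  have hE2 : ∫ ω, Z (fun l => X l ω) ^ 2 ∂P = Z μ ^ 2 + ∑ l, a l ^ 2 * σ l ^ 2 := by
    simp only [hZ, integral_sq_const_add_sum_mul_of_uncorrelated hX hcov, hmean, hVar]
  rw [hTPE1, hTPE2, hE1, hE2, hZ]
  exact ⟨rfl, rfl, rfl⟩

/-- For pairwise uncorrelated square-integrable random variables and an affine
function `Z(x) = b + Σₗ aₗ·xₗ`, Hong's two-point estimate of the second raw
moment equals the exact value `E[Z²] = (b + Σₗ aₗ·μₗ)² + Σₗ aₗ²·σₗ²`;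
consequently the TPE estimate of the variance of `Z` is also exact. -/
theorem tpe_second_raw_moment_exact_for_affine
    {Ω : Type*} [MeasurableSpace Ω] (P : Measure Ω) [IsProbabilityMeasure P]
    (m : ℕ) (hm : 1 ≤ m) (X : Fin m → Ω → ℝ) (μ σ lam : Fin m → ℝ)
    (hint : ∀ l, Integrable (X l) P)
    (hint2 : ∀ l, Integrable (fun ω => (X l ω) ^ 2) P)
    (hmean : ∀ l, ∫ ω, X l ω ∂P = μ l)
    (hσ : ∀ l, 0 < σ l)
    (hvar : ∀ l, ∫ ω, (X l ω - μ l) ^ 2 ∂P = (σ l) ^ 2)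
    (huncorr : ∀ i j, i ≠ j → ∫ ω, (X i ω - μ i) * (X j ω - μ j) ∂P = 0)
    (ξ w Pt : Fin m → Fin 2 → ℝ)
    (hξ₁ : ∀ l, ξ l 0 = lam l / 2 + Real.sqrt ((m : ℝ) + (lam l / 2) ^ 2))
    (hξ₂ : ∀ l, ξ l 1 = lam l / 2 - Real.sqrt ((m : ℝ) + (lam l / 2) ^ 2))
    (hw₁ : ∀ l, w l 0 = -(1 / (m : ℝ)) * ξ l 1 / (ξ l 0 - ξ l 1))
    (hw₂ : ∀ l, w l 1 = (1 / (m : ℝ)) * ξ l 0 / (ξ l 0 - ξ l 1))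
    (hPt : ∀ l k, Pt l k = μ l + ξ l k * σ l)
    (Z : (Fin m → ℝ) → ℝ) (b : ℝ) (a : Fin m → ℝ)
    (hZ : ∀ x, Z x = b + ∑ l, a l * x l) :
    (∑ l, ∑ k, w l k * (Z (Function.update μ l (Pt l k))) ^ 2) =
        ∫ ω, (Z (fun l => X l ω)) ^ 2 ∂P ∧
      (∫ ω, (Z (fun l => X l ω)) ^ 2 ∂P) =
        (b + ∑ l, a l * μ l) ^ 2 + ∑ l, (a l) ^ 2 * (σ l) ^ 2 ∧
      (∑ l, ∑ k, w l k * (Z (Function.update μ l (Pt l k))) ^ 2) -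
          (∑ l, ∑ k, w l k * Z (Function.update μ l (Pt l k))) ^ 2 =
        (∫ ω, (Z (fun l => X l ω)) ^ 2 ∂P) -
          (∫ ω, Z (fun l => X l ω) ∂P) ^ 2 :=
  tpe_second_raw_moment_exact_for_affine_general P m hm X μ σ lam hint hint2 hmean hvar huncorr ξ w
    Pt hξ₁ hξ₂ hw₁ hw₂ hPt Z b a hZ
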